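/- arXiv:2209.00158 — 5 statements merged into one kernel-verified Lean document; each statement's English description precedes it below -/
import Mathlib

section
/- For an array A[1..n] with no two consecutive equal elements, for every index i in {1,...,n-1}, node i is an internal node of the 2d-min heap Min(A) if and only if node i is a leaf node of the 2d-max heap Max(A). -/
def psv (A : ℕ → ℤ) (i : ℕ) : ℕ := Nat.findGreatest (fun j => A j < A i) (i - 1)

def plv (A : ℕ → ℤ) (i : ℕ) : ℕ := Nat.findGreatest (fun j => A i < A j) (i - 1)

def internalMin (A : ℕ → ℤ) (n i : ℕ) : Prop := ∃ j, 1 ≤ j ∧ j ≤ n ∧ psv A j = i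

def internalMax (A : ℕ → ℤ) (n i : ℕ) : Prop := ∃ j, 1 ≤ j ∧ j ≤ n ∧ plv A j = i

def leafMin (A : ℕ → ℤ) (n i : ℕ) : Prop := ¬ internalMin A n i

def leafMax (A : ℕ → ℤ) (n i : ℕ) : Prop := ¬ internalMax A n i

def NoConsecEq (A : ℕ → ℤ) (n : ℕ) : Prop := ∀ i, 1 ≤ i → i < n → A i ≠ A (i + 1)

def isLeftmostChildMin (A : ℕ → ℤ) (n c : ℕ) : Prop :=
  1 ≤ c ∧ c ≤ n ∧ ∀ j, 1 ≤ j → j ≤ n → psv A j = psv A c → c ≤ j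

def isLeftmostChildMax (A : ℕ → ℤ) (n c : ℕ) : Prop :=
  1 ≤ c ∧ c ≤ n ∧ ∀ j, 1 ≤ j → j ≤ n → plv A j = plv A c → c ≤ j

def immLeftSibMin (A : ℕ → ℤ) (n j i : ℕ) : Prop :=
  1 ≤ j ∧ j < i ∧ i ≤ n ∧ psv A j = psv A i ∧ ∀ k, j < k → k < i → psv A k ≠ psv A i

def immLeftSibMax (A : ℕ → ℤ) (n j i : ℕ) : Prop :=
  1 ≤ j ∧ j < i ∧ i ≤ n ∧ plv A j = plv A i ∧ ∀ k, j < k → k < i → plv A k ≠ plv A i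

def redMin (A : ℕ → ℤ) (n i : ℕ) : Prop := ∃ j, immLeftSibMin A n j i ∧ A j ≠ A i

def redMax (A : ℕ → ℤ) (n i : ℕ) : Prop := ∃ j, immLeftSibMax A n j i ∧ A j ≠ A i

def validMin (A : ℕ → ℤ) (n i : ℕ) : Prop :=
  1 ≤ i ∧ i ≤ n ∧ ¬ isLeftmostChildMin A n i ∧ ¬ ∃ j, immLeftSibMin A n j i ∧ leafMin A n j

def validMax (A : ℕ → ℤ) (n i : ℕ) : Prop :=
  1 ≤ i ∧ i ≤ n ∧ ¬ isLeftmostChildMax A n i ∧ ¬ ∃ j, immLeftSibMax A n j i ∧ leafMax A n j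

lemma internal_iff_aux {P : ℕ → Prop} [DecidablePred P] {i n : ℕ} (hi : 1 ≤ i) (hin : i < n)
    (H : ∃ j, 1 ≤ j ∧ j ≤ n ∧ Nat.findGreatest P (j - 1) = i) (Hmono : ¬ P (i+1) → P i → False) :
    P i := by
  obtain ⟨j, hj1, hjn, hfg⟩ := H
  have hPi : P i := Nat.findGreatest_of_ne_zero hfg (by omega)
  exact hPi

lemma internalMin_iff (A : ℕ → ℤ) (n : ℕ) {i : ℕ} (hi : 1 ≤ i) (hin : i < n) :
    internalMin A n i ↔ A i < A (i + 1) := by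
  constructor
  · rintro ⟨j, hj1, hjn, hpsv⟩
    unfold psv at hpsv
    have hPi : A i < A j := Nat.findGreatest_of_ne_zero hpsv (by omega)
    have hij : i ≤ j - 1 := hpsv ▸ Nat.findGreatest_le (j - 1)
    rcases eq_or_lt_of_le (show i + 1 ≤ j by omega) with heq | hlt
    · exact heq ▸ hPi
    · have := Nat.findGreatest_is_greatest (P := fun k => A k < A j) (n := j - 1)
        (k := i + 1) (by omega) (by omega)
      exact lt_of_lt_of_le hPi (not_lt.mp this)
  · intro hlt
    refine ⟨i + 1, by omega, by omega, ?_⟩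
    unfold psv
    simp only [Nat.add_sub_cancel]
    exact le_antisymm (Nat.findGreatest_le i) (Nat.le_findGreatest le_rfl hlt)

lemma internalMax_iff (A : ℕ → ℤ) (n : ℕ) {i : ℕ} (hi : 1 ≤ i) (hin : i < n) :
    internalMax A n i ↔ A (i + 1) < A i := by
  constructor
  · rintro ⟨j, hj1, hjn, hplv⟩
    unfold plv at hplv
    have hPi : A j < A i := Nat.findGreatest_of_ne_zero hplv (by omega)
    have hij : i ≤ j - 1 := hplv ▸ Nat.findGreatest_le (j - 1)
    rcases eq_or_lt_of_le (show i + 1 ≤ j by omega) with heq | hlt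
    · exact heq ▸ hPi
    · have := Nat.findGreatest_is_greatest (P := fun k => A j < A k) (n := j - 1)
        (k := i + 1) (by omega) (by omega)
      exact lt_of_le_of_lt (not_lt.mp this) hPi
  · intro hlt
    refine ⟨i + 1, by omega, by omega, ?_⟩
    unfold plv
    simp only [Nat.add_sub_cancel]
    exact le_antisymm (Nat.findGreatest_le i) (Nat.le_findGreatest le_rfl hlt)

theorem stmt0 (A : ℕ → ℤ) (n : ℕ) (h : NoConsecEq A n) :
    ∀ i, 1 ≤ i → i < n → (internalMin A n i ↔ leafMax A n i) := by
  intro i hi hin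
  rw [internalMin_iff A n hi hin, leafMax, internalMax_iff A n hi hin]
  have hne := h i hi hin
  constructor
  · exact fun h1 h2 => absurd (lt_trans h1 h2) (lt_irrefl _)
  · intro h1
    rcases lt_trichotomy (A i) (A (i+1)) with h2 | h2 | h2
    · exact h2
    · exact absurd h2 hne
    · exact absurd h2 h1
end

section
/- For an array A with no two consecutive equal elements, in the colored 2d-min heap cMin(A), every node whose immediate left sibling is a leaf is colored red. Moreover, if node j is the immediate left sibling of node i and j is a leaf, then j = i-1. -/
theorem stmt3 (A : ℕ → ℤ) (n : ℕ) (h : NoConsecEq A n) (i j : ℕ)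
    (hs : immLeftSibMin A n j i) (hl : leafMin A n j) :
    redMin A n i ∧ j = i - 1 := by
  obtain ⟨hj1, hji, hin, hpeq, himm⟩ := hs
  -- spec of psv A i
  have hi_spec := (Nat.findGreatest_eq_iff (m := psv A i)
      (P := fun m => A m < A i) (k := i - 1)).mp rfl
  have hj_spec := (Nat.findGreatest_eq_iff (m := psv A j)
      (P := fun m => A m < A j) (k := j - 1)).mp rfl
  set p := psv A i with hp
  have hpj : p ≤ j - 1 := by rw [← hpeq]; exact hj_spec.1
  have hmain : i = j + 1 := by
    by_contra hne
    have hlt : j + 1 < i := lt_of_le_of_ne hji fun hh => hne hh.symm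
    -- A (j+1) < A j, since j is a leaf
    have hAj1 : A (j + 1) < A j := by
      rcases lt_trichotomy (A (j+1)) (A j) with hc | hc | hc
      · exact hc
      · exact absurd hc.symm (h j hj1 (lt_of_lt_of_le (by omega) hin))
      · exfalso
        apply hl
        refine ⟨j + 1, by omega, by omega, ?_⟩
        show Nat.findGreatest (fun m => A m < A (j+1)) (j + 1 - 1) = j
        rw [Nat.findGreatest_eq_iff]
        exact ⟨by omega, fun _ => hc, fun m hm1 hm2 => by omega⟩
    -- choose leftmost minimum k in (j, i)
    have hex : ∃ m, j < m ∧ m < i ∧ ∀ m', j < m' → m' < i → A m ≤ A m' := by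
      obtain ⟨k, hk, hkmin⟩ := Finset.exists_min_image (Finset.Icc (j+1) (i-1)) A
        ⟨j+1, Finset.mem_Icc.mpr ⟨le_refl _, by omega⟩⟩
      rw [Finset.mem_Icc] at hk
      refine ⟨k, by omega, by omega, fun m' h1 h2 => ?_⟩
      exact hkmin m' (Finset.mem_Icc.mpr ⟨by omega, by omega⟩)
    classical
    set k := Nat.find hex with hkdef
    obtain ⟨hk1, hk2, hkmin⟩ := Nat.find_spec hex
    -- for m in (j, k), A m > A k
    have hmid : ∀ m, j < m → m < k → A k < A m := by
      intro m hm1 hm2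
      have hnot := Nat.find_min hex hm2
      rcases lt_or_ge (A k) (A m) with hc | hc
      · exact hc
      · exfalso; apply hnot
        refine ⟨hm1, by omega, fun m' h1 h2 => le_trans hc (hkmin m' h1 h2)⟩
    -- A k ≤ A (j+1) < A j
    have hkj : A k < A j := lt_of_le_of_lt (hkmin (j+1) (by omega) hlt) hAj1
    -- A i ≤ A k  (since p < k ≤ i-1 and psv A i = p)
    have hik : ¬ A k < A i := hi_spec.2.2 (show p < k by omega) (by omega)
    -- psv A k = p, contradiction
    apply himm k hk1 hk2
    show Nat.findGreatest (fun m => A m < A k) (k - 1) = p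
    rw [Nat.findGreatest_eq_iff]
    refine ⟨by omega, ?_, ?_⟩
    · intro hp0
      have : A p < A i := hi_spec.2.1 hp0
      omega
    · intro m hm1 hm2 hc
      rcases lt_trichotomy m j with hmj | hmj | hmj
      · -- p < m ≤ j-1 : A m ≥ A j > A k
        have hnm : ¬ A m < A j := hj_spec.2.2 (show psv A j < m by rw [hpeq]; exact hm1) (by omega)
        exact hnm (hc.trans hkj)
      · subst hmj; omega
      · exact absurd hc (not_lt_of_gt (hmid m hmj (by omega)))
  constructor
  · refine ⟨j, ⟨hj1, hji, hin, hpeq, himm⟩, ?_⟩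
    have := h j hj1 (by omega)
    rw [hmain]; exact this
  · omega
end

section
/- For an array A[1..n] in which all occurrences of equal elements appear consecutively, the array A can be uniquely reconstructed from the answers to all range q-th minimum queries RMin(i,j,q) and range q-th maximum queries RMax(i,j,q), up to order-isomorphism, provided A arises from a Baxter permutation with duplicated consecutive entries (i.e., A belongs to the family 𝒜_n). -/
/-- `π` is (the extension by junk of) a Baxter permutation of `{1,…,m}`:
a bijection of `{1,…,m}` avoiding the patterns 2-41-3 and 3-14-2. -/
def IsBaxterPerm (m : ℕ) (π : ℕ → ℕ) : Prop :=
  Set.BijOn π (Set.Icc 1 m) (Set.Icc 1 m) ∧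
  (¬ ∃ p q r, 1 ≤ p ∧ p < q ∧ q + 1 < r ∧ r ≤ m ∧
      π (q + 1) < π p ∧ π p < π r ∧ π r < π q) ∧
  (¬ ∃ p q r, 1 ≤ p ∧ p < q ∧ q + 1 < r ∧ r ≤ m ∧
      π q < π r ∧ π r < π p ∧ π p < π (q + 1))

/-- Membership in the family `𝒜ₙ`: some `k` positions in `{2,…,n}` copy the value of their
left neighbour, and the remaining `n-k` positions carry a Baxter permutation in order. -/
def InFamilyA (n : ℕ) (A : ℕ → ℕ) : Prop :=
  ∃ K : Finset ℕ, K ⊆ Finset.Icc 2 n ∧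
    ∃ π : ℕ → ℕ, IsBaxterPerm (n - K.card) π ∧
      (∀ i, 2 ≤ i → i ≤ n → i ∈ K → A i = A (i - 1)) ∧
      (∀ i, 1 ≤ i → i ≤ n → i ∉ K →
        A i = π (((Finset.Icc 1 i).filter (fun t => t ∉ K)).card))

/-- positions of the minimum of `A[i..j]`, in increasing order. -/
def minOccs (A : ℕ → ℕ) (i j : ℕ) : List ℕ :=
  (List.range (j + 1)).filter (fun p => decide (i ≤ p ∧ ∀ t ∈ Finset.Icc i j, A p ≤ A t))

/-- positions of the maximum of `A[i..j]`, in increasing order. -/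
def maxOccs (A : ℕ → ℕ) (i j : ℕ) : List ℕ :=
  (List.range (j + 1)).filter (fun p => decide (i ≤ p ∧ ∀ t ∈ Finset.Icc i j, A t ≤ A p))

/-- `rmin A i j q`: position of the `q`-th leftmost occurrence of the minimum of `A[i..j]`
(the last occurrence if there are fewer than `q`). -/
def rmin (A : ℕ → ℕ) (i j q : ℕ) : ℕ :=
  (minOccs A i j).getD (min (q - 1) ((minOccs A i j).length - 1)) 0

/-- `rmax A i j q`: position of the `q`-th leftmost occurrence of the maximum of `A[i..j]`
(the last occurrence if there are fewer than `q`). -/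
def rmax (A : ℕ → ℕ) (i j q : ℕ) : ℕ :=
  (maxOccs A i j).getD (min (q - 1) ((maxOccs A i j).length - 1)) 0

/-!
Since `π` is injective, the copied positions are exactly the `x` with `A x = A (x - 1)`, and
`rmin`, `rmax` on `[x - 1, x]` detect these. So `A` and `B` have the same copy set `K` and factor
as `π_A ∘ keptCount K` and `π_B ∘ keptCount K` through the same monotone surjection onto the
ranks `1, …, m`; their range minima and maxima then give common range argmins and argmaxes of
`π_A` and `π_B`. Two Baxter permutations with common range argmins and argmaxes are order
isomorphic, by induction on `q - p`: if some `t ∈ (p, q)` has its value between those at `p` and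
`q`, combine the comparisons on `[p, t]` and `[t, q]`; otherwise the relative order of the argmin
and the argmax of `[p, q]` decides, since min before max with `π q < π p` yields a 3-14-2
pattern, and max before min with `π p < π q` a 2-41-3 pattern.
-/

open Set OrderDual

theorem Nat.exists_step_of_le {P : ℕ → Prop} {i j : ℕ} (hij : i ≤ j) (hi : P i) (hj : ¬ P j) :
    ∃ u, i ≤ u ∧ u < j ∧ P u ∧ ¬ P (u + 1) := by
  induction j, hij using Nat.le_induction with
  | base => exact absurd hi hj
  | succ j hij ih =>
    by_cases hPj : P j
    · exact ⟨j, hij, j.lt_succ_self, hPj, hj⟩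
    · obtain ⟨u, hiu, huj, hu⟩ := ih hPj
      exact ⟨u, hiu, by omega, hu⟩

theorem Monotone.image_Icc_of_le_add_one {f : ℕ → ℕ} (hf : Monotone f)
    (hstep : ∀ k, f (k + 1) ≤ f k + 1) {i j : ℕ} (hij : i ≤ j) :
    f '' Icc i j = Icc (f i) (f j) := by
  ext d
  constructor
  · rintro ⟨t, ht, rfl⟩
    exact ⟨hf ht.1, hf ht.2⟩
  · rintro ⟨hid, hdj⟩
    obtain rfl | hdj := hdj.eq_or_lt
    · exact ⟨j, right_mem_Icc.2 hij, rfl⟩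
    obtain ⟨u, hiu, huj, hu, hu1⟩ :=
      Nat.exists_step_of_le (P := fun k => f k ≤ d) hij hid hdj.not_ge
    exact ⟨u, ⟨hiu, huj.le⟩, by have := hstep u; omega⟩

theorem IsMinOn.image_of_eqOn_comp {ι κ γ : Type*} [Preorder γ] {C : ι → γ} {F : κ → γ}
    {r : ι → κ} {s : Set ι} {p : ι} (h : IsMinOn C s p) (hC : EqOn C (F ∘ r) s) (hp : p ∈ s) :
    IsMinOn F (r '' s) (r p) := by
  rintro _ ⟨t, ht, rfl⟩
  simpa [hC ht, hC hp] using h ht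

theorem lt_iff_lt_of_mem_uIcc {α β : Type*} [LinearOrder α] [LinearOrder β] {a b c : α}
    {a' b' c' : β} (hab : a < b ↔ a' < b') (hbc : b < c ↔ b' < c') (hb : b ∈ uIcc a c)
    (hab₀ : a ≠ b) (hbc₀ : b ≠ c) : a < c ↔ a' < c' := by
  rcases mem_uIcc.1 hb with ⟨h₁, h₂⟩ | ⟨h₁, h₂⟩
  · have := hab.1 (lt_of_le_of_ne h₁ hab₀)
    have := hbc.1 (lt_of_le_of_ne h₂ hbc₀)
    exact iff_of_true (by order) (by order)
  · have := hab.not.1 (by order)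
    have := hbc.not.1 (by order)
    exact iff_of_false (by order) (by order)

theorem isLeast_headD_filter_range {P : ℕ → Prop} [DecidablePred P] {i j p : ℕ}
    (hp : p ∈ Icc i j) (hPp : P p) :
    IsLeast {x | x ∈ Icc i j ∧ P x}
      (((List.range (j + 1)).filter fun x => decide (i ≤ x ∧ P x)).headD 0) := by
  set l := (List.range (j + 1)).filter fun x => decide (i ≤ x ∧ P x)
  have mem_l : ∀ x, x ∈ l ↔ x ∈ Icc i j ∧ P x := fun x => by
    simp only [l, List.mem_filter, List.mem_range, decide_eq_true_eq, mem_Icc, Nat.lt_succ_iff]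
    tauto
  obtain ⟨a, l', hl⟩ : ∃ a l', l = a :: l' := List.exists_cons_of_ne_nil
    (List.ne_nil_of_mem ((mem_l p).2 ⟨hp, hPp⟩))
  have hsorted : (a :: l').Pairwise (· < ·) :=
    hl ▸ List.pairwise_lt_range.sublist List.filter_sublist
  rw [hl, List.headD_cons]
  refine ⟨(mem_l a).1 (hl ▸ List.mem_cons_self), fun x hx => ?_⟩
  rcases List.mem_cons.1 (hl ▸ (mem_l x).2 hx) with rfl | hx'
  · exact le_rfl
  · exact (List.rel_of_pairwise_cons hsorted hx').le

theorem rmin_one_isLeast (A : ℕ → ℕ) {i j : ℕ} (hij : i ≤ j) :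
    IsLeast {p | p ∈ Icc i j ∧ IsMinOn A (Icc i j) p} (rmin A i j 1) := by
  obtain ⟨p, hp, hmin⟩ := (Icc i j).exists_min_image A (finite_Icc i j) (nonempty_Icc.2 hij)
  have h := isLeast_headD_filter_range (P := fun x => ∀ t ∈ Finset.Icc i j, A x ≤ A t) hp
    (by simpa using hmin)
  have hrmin : rmin A i j 1 = (minOccs A i j).headD 0 := by
    unfold rmin; cases minOccs A i j <;> simp
  rw [hrmin]
  convert h using 2
  · ext x
    simp [isMinOn_iff]
  · rfl

theorem rmax_one_isLeast (A : ℕ → ℕ) {i j : ℕ} (hij : i ≤ j) :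
    IsLeast {p | p ∈ Icc i j ∧ IsMaxOn A (Icc i j) p} (rmax A i j 1) := by
  obtain ⟨p, hp, hmax⟩ := (Icc i j).exists_max_image A (finite_Icc i j) (nonempty_Icc.2 hij)
  have h := isLeast_headD_filter_range (P := fun x => ∀ t ∈ Finset.Icc i j, A t ≤ A x) hp
    (by simpa using hmax)
  have hrmax : rmax A i j 1 = (maxOccs A i j).headD 0 := by
    unfold rmax; cases maxOccs A i j <;> simp
  rw [hrmax]
  convert h using 2
  · ext x
    simp [isMaxOn_iff]
  · rfl

theorem apply_succ_eq_iff_rmin_rmax (A : ℕ → ℕ) (j : ℕ) :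
    A (j + 1) = A j ↔ rmin A j (j + 1) 1 = j ∧ rmax A j (j + 1) 1 = j := by
  have hmin := rmin_one_isLeast A j.le_succ
  have hmax := rmax_one_isLeast A j.le_succ
  have hj : j ∈ Icc j (j + 1) := left_mem_Icc.2 j.le_succ
  constructor
  · intro h
    have hext : ∀ t ∈ Icc j (j + 1), A t = A j := fun t ⟨ht₁, ht₂⟩ => by
      obtain rfl | rfl : t = j ∨ t = j + 1 := by omega
      exacts [rfl, h]
    refine ⟨le_antisymm (hmin.2 ⟨hj, fun t ht => ?_⟩) hmin.1.1.1,
      le_antisymm (hmax.2 ⟨hj, fun t ht => ?_⟩) hmax.1.1.1⟩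
    all_goals simp [hext t ht]
  · rintro ⟨h₁, h₂⟩
    have hle₁ := hmin.1.2 (right_mem_Icc.2 j.le_succ)
    have hle₂ := hmax.1.2 (right_mem_Icc.2 j.le_succ)
    rw [h₁] at hle₁
    rw [h₂] at hle₂
    exact le_antisymm hle₂ hle₁

def keptCount (K : Finset ℕ) (i : ℕ) : ℕ := ((Finset.Icc 1 i).filter (fun t => t ∉ K)).card

theorem keptCount_mono (K : Finset ℕ) : Monotone (keptCount K) := fun _ _ h =>
  Finset.card_le_card (Finset.filter_subset_filter _ (Finset.Icc_subset_Icc_right h))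

theorem keptCount_succ (K : Finset ℕ) (i : ℕ) :
    keptCount K (i + 1) = keptCount K i + if i + 1 ∈ K then 0 else 1 := by
  rw [keptCount, keptCount, ← Finset.insert_Icc_right_eq_Icc_add_one (by omega),
    Finset.filter_insert]
  split_ifs
  · rfl
  · rw [Finset.card_insert_of_notMem (by simp)]

theorem keptCount_image_Icc (K : Finset ℕ) {i j : ℕ} (hij : i ≤ j) :
    keptCount K '' Icc i j = Icc (keptCount K i) (keptCount K j) :=
  (keptCount_mono K).image_Icc_of_le_add_one
    (fun k => by rw [keptCount_succ]; split <;> omega) hij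

theorem keptCount_eq_sub_card {n : ℕ} {K : Finset ℕ} (hK : K ⊆ Finset.Icc 1 n) :
    keptCount K n = n - K.card := by
  rw [keptCount, Finset.filter_not, Finset.filter_mem_eq_inter, Finset.inter_eq_right.2 hK,
    Finset.card_sdiff_of_subset hK, Nat.card_Icc, Nat.add_sub_cancel]

theorem keptCount_image_Icc_one {n : ℕ} {K : Finset ℕ} (hK : K ⊆ Finset.Icc 2 n) :
    keptCount K '' Icc 1 n = Icc 1 (n - K.card) := by
  have h1 : keptCount K 1 = 1 := by
    have : 1 ∉ K := fun h => by simpa using hK h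
    simp [keptCount, Finset.filter_singleton, this]
  rcases Nat.eq_zero_or_pos n with rfl | hn
  · simp_all
  rw [keptCount_image_Icc K hn, h1,
    keptCount_eq_sub_card (hK.trans (Finset.Icc_subset_Icc_left one_le_two))]

theorem keptCount_mem_Icc {n : ℕ} {K : Finset ℕ} (hK : K ⊆ Finset.Icc 2 n) {i : ℕ}
    (hi : i ∈ Icc 1 n) : keptCount K i ∈ Icc 1 (n - K.card) :=
  keptCount_image_Icc_one hK ▸ mem_image_of_mem _ hi

theorem InFamilyA.exists_eqOn_comp_keptCount {n : ℕ} {A : ℕ → ℕ} (hA : InFamilyA n A) :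
    ∃ K ⊆ Finset.Icc 2 n, ∃ π, IsBaxterPerm (n - K.card) π ∧
      EqOn A (π ∘ keptCount K) (Icc 1 n) := by
  obtain ⟨K, hK, π, hπ, hcopy, hval⟩ := hA
  refine ⟨K, hK, π, hπ, fun i hi => ?_⟩
  obtain ⟨hi, hin⟩ := hi
  induction i, hi using Nat.le_induction with
  | base => exact hval 1 le_rfl hin fun h => by simpa using hK h
  | succ i hi ih =>
    by_cases hmem : i + 1 ∈ K
    · rw [hcopy (i + 1) (by omega) hin hmem, Nat.add_sub_cancel, ih (by omega)]
      simp [keptCount_succ, hmem]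
    · exact hval (i + 1) (by omega) hin hmem

theorem eq_filter_of_eqOn_comp_keptCount {n : ℕ} {K : Finset ℕ} (hK : K ⊆ Finset.Icc 2 n)
    {π A : ℕ → ℕ} (hπ : InjOn π (Icc 1 (n - K.card)))
    (hA : EqOn A (π ∘ keptCount K) (Icc 1 n)) :
    K = (Finset.Icc 2 n).filter fun x => A x = A (x - 1) := by
  ext x
  rw [Finset.mem_filter]
  by_cases hx : x ∈ Finset.Icc 2 n
  · obtain ⟨hx₂, hxn⟩ := Finset.mem_Icc.1 hx
    obtain ⟨j, rfl⟩ : ∃ j, x = j + 1 := ⟨x - 1, by omega⟩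
    have hj : j ∈ Icc 1 n := ⟨by omega, by omega⟩
    have hj₁ : j + 1 ∈ Icc 1 n := ⟨by omega, hxn⟩
    rw [Nat.add_sub_cancel, hA hj, hA hj₁, Function.comp_apply, Function.comp_apply,
      hπ.eq_iff (keptCount_mem_Icc hK hj₁) (keptCount_mem_Icc hK hj), keptCount_succ]
    split_ifs with hmem <;> simp [hx, hmem]
  · exact iff_of_false (fun h => hx (hK h)) fun h => hx h.1

/-- Range maxima are handled as range minima of `toDual ∘ f`. -/
def CommonRangeMin {α β : Type*} [Preorder α] [Preorder β] (m : ℕ) (f : ℕ → α) (g : ℕ → β) :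
    Prop :=
  ∀ a b, 1 ≤ a → a ≤ b → b ≤ m →
    ∃ c ∈ Icc a b, IsMinOn f (Icc a b) c ∧ IsMinOn g (Icc a b) c

theorem commonRangeMin_of_rmin_eq {n : ℕ} {A B : ℕ → ℕ}
    (h : ∀ i j, 1 ≤ i → i ≤ j → j ≤ n → rmin A i j 1 = rmin B i j 1) : CommonRangeMin n A B :=
  fun i j hi hij hj =>
    ⟨rmin A i j 1, (rmin_one_isLeast A hij).1.1, (rmin_one_isLeast A hij).1.2,
      h i j hi hij hj ▸ (rmin_one_isLeast B hij).1.2⟩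

theorem commonRangeMin_toDual_of_rmax_eq {n : ℕ} {A B : ℕ → ℕ}
    (h : ∀ i j, 1 ≤ i → i ≤ j → j ≤ n → rmax A i j 1 = rmax B i j 1) :
    CommonRangeMin n (toDual ∘ A) (toDual ∘ B) :=
  fun i j hi hij hj =>
    ⟨rmax A i j 1, (rmax_one_isLeast A hij).1.1,
      isMinOn_dual_iff.2 (rmax_one_isLeast A hij).1.2,
      isMinOn_dual_iff.2 (h i j hi hij hj ▸ (rmax_one_isLeast B hij).1.2)⟩

theorem CommonRangeMin.of_eqOn_comp_keptCount {α β : Type*} [Preorder α] [Preorder β] {n : ℕ}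
    {K : Finset ℕ} (hK : K ⊆ Finset.Icc 2 n) {A f : ℕ → α} {B g : ℕ → β}
    (hA : EqOn A (f ∘ keptCount K) (Icc 1 n)) (hB : EqOn B (g ∘ keptCount K) (Icc 1 n))
    (h : CommonRangeMin n A B) : CommonRangeMin (n - K.card) f g := by
  intro a b ha hab hb
  have hn : K ⊆ Finset.Icc 1 n := hK.trans (Finset.Icc_subset_Icc_left one_le_two)
  obtain ⟨i, hi, rfl⟩ : a ∈ keptCount K '' Icc 1 n := by
    rw [keptCount_image_Icc_one hK]
    exact ⟨ha, hab.trans hb⟩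
  obtain ⟨j, hj, rfl⟩ : b ∈ keptCount K '' Icc i n := by
    rw [keptCount_image_Icc K hi.2, keptCount_eq_sub_card hn]
    exact ⟨hab, hb⟩
  obtain ⟨p, hp, hAp, hBp⟩ := h i j hi.1 hj.1 hj.2
  have hsub : Icc i j ⊆ Icc 1 n := Icc_subset_Icc hi.1 hj.2
  rw [← keptCount_image_Icc K hj.1]
  exact ⟨keptCount K p, mem_image_of_mem _ hp, hAp.image_of_eqOn_comp (hA.mono hsub) hp,
    hBp.image_of_eqOn_comp (hB.mono hsub) hp⟩

section Pattern

variable {α : Type*} [LinearOrder α] {f : ℕ → α} {m p q i j : ℕ}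

/-- If `f q < f p`, the values climb from below `f q` at the argmin to above `f p` at the
argmax without ever landing in `[f q, f p]`, so some step `u, u + 1` jumps over it and
`p, u, u + 1, q` is a 3-14-2 pattern. -/
theorem le_of_isMinOn_of_isMaxOn_of_lt
    (hf : ¬ ∃ p q r, 1 ≤ p ∧ p < q ∧ q + 1 < r ∧ r ≤ m ∧
      f q < f r ∧ f r < f p ∧ f p < f (q + 1))
    (hp : 1 ≤ p) (hq : q ≤ m) (hi : i ∈ Icc p q) (hj : j ∈ Icc p q) (hij : i < j)
    (hmin : IsMinOn f (Icc p q) i) (hmax : IsMaxOn f (Icc p q) j)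
    (hgap : ∀ t ∈ Ioo p q, f t ∉ uIcc (f p) (f q)) : f p ≤ f q := by
  by_contra! hqp
  have hgap' : ∀ t ∈ Ioo p q, f t < f q ∨ f p < f t := fun t ht => by
    by_contra! h
    exact hgap t ht (mem_uIcc.2 (Or.inr h))
  obtain ⟨hpi, hiq⟩ := hi
  obtain ⟨hpj, hjq⟩ := hj
  have hi_min : f i ≤ f q := hmin (right_mem_Icc.2 (hpi.trans hiq))
  have hj_max : f p ≤ f j := hmax (left_mem_Icc.2 (hpj.trans hjq))
  have hip : i ≠ p := by rintro rfl; order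
  have hjq' : j ≠ q := by rintro rfl; order
  have hi_low : f i < f q := (hgap' i ⟨by omega, by omega⟩).resolve_right fun h => by order
  have hj_high : ¬ f j < f q := fun h => by order
  obtain ⟨u, hiu, huj, hu, hu₁⟩ :=
    Nat.exists_step_of_le (P := (f · < f q)) hij.le hi_low hj_high
  have hu₁_high : f p < f (u + 1) := (hgap' (u + 1) ⟨by omega, by omega⟩).resolve_left hu₁
  exact hf ⟨p, u, q, hp, by omega, by omega, hq, hu, hqp, hu₁_high⟩

theorem lt_iff_lt_of_isMinOn_of_isMaxOn
    (hf₁ : ¬ ∃ p q r, 1 ≤ p ∧ p < q ∧ q + 1 < r ∧ r ≤ m ∧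
      f (q + 1) < f p ∧ f p < f r ∧ f r < f q)
    (hf₂ : ¬ ∃ p q r, 1 ≤ p ∧ p < q ∧ q + 1 < r ∧ r ≤ m ∧
      f q < f r ∧ f r < f p ∧ f p < f (q + 1))
    (hp : 1 ≤ p) (hq : q ≤ m) (hi : i ∈ Icc p q) (hj : j ∈ Icc p q)
    (hmin : IsMinOn f (Icc p q) i) (hmax : IsMaxOn f (Icc p q) j)
    (hgap : ∀ t ∈ Ioo p q, f t ∉ uIcc (f p) (f q)) (hpq : f p ≠ f q) : f p < f q ↔ i < j := by
  rcases lt_trichotomy i j with hij | rfl | hji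
  · exact iff_of_true (lt_of_le_of_ne (le_of_isMinOn_of_isMaxOn_of_lt hf₂ hp hq hi hj hij hmin
      hmax hgap) hpq) hij
  · have hpq' : p ≤ q := hi.1.trans hi.2
    have h₁ : f i ≤ f p := hmin (left_mem_Icc.2 hpq')
    have h₂ : f i ≤ f q := hmin (right_mem_Icc.2 hpq')
    have h₃ : f p ≤ f i := hmax (left_mem_Icc.2 hpq')
    have h₄ : f q ≤ f i := hmax (right_mem_Icc.2 hpq')
    exact absurd (le_antisymm (h₃.trans h₂) (h₄.trans h₁)) hpq
  · refine iff_of_false (fun h => ?_) hji.not_gt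
    -- for `toDual ∘ f` the pattern 2-41-3 of `f` becomes 3-14-2
    have hdual := le_of_isMinOn_of_isMaxOn_of_lt (f := toDual ∘ f)
      (fun ⟨p, q, r, h₁, h₂, h₃, h₄, h₅, h₆, h₇⟩ => hf₁ ⟨p, q, r, h₁, h₂, h₃, h₄, h₇, h₆, h₅⟩)
      hp hq hj hi hji (isMinOn_dual_iff.2 hmax) (isMaxOn_dual_iff.2 hmin)
      (fun t ht => by simpa [uIcc_comm] using hgap t ht)
    exact (toDual_le_toDual.1 hdual).not_gt h

end Pattern

namespace IsBaxterPerm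

variable {m : ℕ} {f g : ℕ → ℕ}

theorem lt_iff_lt_of_commonRangeMin (hf : IsBaxterPerm m f) (hg : IsBaxterPerm m g)
    (hmin : CommonRangeMin m f g) (hmax : CommonRangeMin m (toDual ∘ f) (toDual ∘ g))
    {p q : ℕ} (hp : 1 ≤ p) (hpq : p < q) (hq : q ≤ m) : f p < f q ↔ g p < g q := by
  have hpm : p ∈ Icc 1 m := ⟨hp, by omega⟩
  have hqm : q ∈ Icc 1 m := ⟨by omega, hq⟩
  obtain ⟨i, hi, hfi, hgi⟩ := hmin p q hp hpq.le hq
  obtain ⟨j, hj, hfj, hgj⟩ := hmax p q hp hpq.le hq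
  rw [isMinOn_dual_iff] at hfj hgj
  by_cases hbetween : ∃ t ∈ Ioo p q, f t ∈ uIcc (f p) (f q) ∨ g t ∈ uIcc (g p) (g q)
  · obtain ⟨t, ⟨hpt, htq⟩, ht⟩ := hbetween
    have htm : t ∈ Icc 1 m := ⟨by omega, by omega⟩
    have hpt' := lt_iff_lt_of_commonRangeMin hf hg hmin hmax hp hpt (by omega)
    have htq' := lt_iff_lt_of_commonRangeMin hf hg hmin hmax (by omega) htq hq
    rcases ht with ht | ht
    · exact lt_iff_lt_of_mem_uIcc hpt' htq' ht (hf.1.injOn.ne hpm htm hpt.ne)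
        (hf.1.injOn.ne htm hqm htq.ne)
    · exact (lt_iff_lt_of_mem_uIcc hpt'.symm htq'.symm ht (hg.1.injOn.ne hpm htm hpt.ne)
        (hg.1.injOn.ne htm hqm htq.ne)).symm
  · push Not at hbetween
    rw [lt_iff_lt_of_isMinOn_of_isMaxOn hf.2.1 hf.2.2 hp hq hi hj hfi hfj
        (fun t ht => (hbetween t ht).1) (hf.1.injOn.ne hpm hqm hpq.ne),
      lt_iff_lt_of_isMinOn_of_isMaxOn hg.2.1 hg.2.2 hp hq hi hj hgi hgj
        (fun t ht => (hbetween t ht).2) (hg.1.injOn.ne hpm hqm hpq.ne)]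
termination_by q - p

theorem lt_iff_lt_and_eq_iff_eq_of_commonRangeMin (hf : IsBaxterPerm m f)
    (hg : IsBaxterPerm m g) (hmin : CommonRangeMin m f g)
    (hmax : CommonRangeMin m (toDual ∘ f) (toDual ∘ g))
    {x y : ℕ} (hx : x ∈ Icc 1 m) (hy : y ∈ Icc 1 m) :
    (f x < f y ↔ g x < g y) ∧ (f x = f y ↔ g x = g y) := by
  refine ⟨?_, by rw [hf.1.injOn.eq_iff hx hy, hg.1.injOn.eq_iff hx hy]⟩
  rcases lt_trichotomy x y with hxy | rfl | hyx
  · exact hf.lt_iff_lt_of_commonRangeMin hg hmin hmax hx.1 hxy hy.2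
  · exact iff_of_false (lt_irrefl _) (lt_irrefl _)
  · have := hf.lt_iff_lt_of_commonRangeMin hg hmin hmax hy.1 hyx hx.2
    have := hf.1.injOn.ne hx hy hyx.ne'
    have := hg.1.injOn.ne hx hy hyx.ne'
    omega

end IsBaxterPerm

theorem stmt8_general (n : ℕ) (A B : ℕ → ℕ)
    (hA : InFamilyA n A) (hB : InFamilyA n B)
    (hq : ∀ i j q, 1 ≤ i → i ≤ j → j ≤ n → 1 ≤ q →
      rmin A i j q = rmin B i j q ∧ rmax A i j q = rmax B i j q) :
    ∀ i j, 1 ≤ i → i ≤ n → 1 ≤ j → j ≤ n →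
      ((A i < A j ↔ B i < B j) ∧ (A i = A j ↔ B i = B j)) := by
  obtain ⟨K, hK, f, hf, hA⟩ := hA.exists_eqOn_comp_keptCount
  obtain ⟨K', hK', g, hg, hB⟩ := hB.exists_eqOn_comp_keptCount
  obtain rfl : K = K' := by
    rw [eq_filter_of_eqOn_comp_keptCount hK hf.1.injOn hA,
      eq_filter_of_eqOn_comp_keptCount hK' hg.1.injOn hB]
    refine Finset.filter_congr fun x hx => ?_
    obtain ⟨hx₂, hxn⟩ := Finset.mem_Icc.1 hx
    obtain ⟨j, rfl⟩ : ∃ j, x = j + 1 := ⟨x - 1, by omega⟩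
    rw [Nat.add_sub_cancel, apply_succ_eq_iff_rmin_rmax, apply_succ_eq_iff_rmin_rmax,
      (hq j (j + 1) 1 (by omega) (by omega) hxn le_rfl).1,
      (hq j (j + 1) 1 (by omega) (by omega) hxn le_rfl).2]
  have hmin := (commonRangeMin_of_rmin_eq fun i j hi hij hj =>
    (hq i j 1 hi hij hj le_rfl).1).of_eqOn_comp_keptCount hK hA hB
  have hmax := (commonRangeMin_toDual_of_rmax_eq fun i j hi hij hj =>
    (hq i j 1 hi hij hj le_rfl).2).of_eqOn_comp_keptCount hK hA.comp_left hB.comp_left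
  intro i j hi hin hj hjn
  rw [hA ⟨hi, hin⟩, hA ⟨hj, hjn⟩, hB ⟨hi, hin⟩, hB ⟨hj, hjn⟩]
  exact hf.lt_iff_lt_and_eq_iff_eq_of_commonRangeMin hg hmin hmax
    (keptCount_mem_Icc hK ⟨hi, hin⟩) (keptCount_mem_Icc hK ⟨hj, hjn⟩)

theorem stmt8 (n : ℕ) (hn : 2 ≤ n) (A B : ℕ → ℕ)
    (hA : InFamilyA n A) (hB : InFamilyA n B)
    (hq : ∀ i j q, 1 ≤ i → i ≤ j → j ≤ n → 1 ≤ q →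
      rmin A i j q = rmin B i j q ∧ rmax A i j q = rmax B i j q) :
    ∀ i j, 1 ≤ i → i ≤ n → 1 ≤ j → j ≤ n →
      ((A i < A j ↔ B i < B j) ∧ (A i = A j ↔ B i = B j)) :=
  stmt8_general n A B hA hB hq
end

section
/- For all n ≥ 1 and 0 ≤ k ≤ n, (2 + log₂ 3)(n - k) + log₂ C(n, k) ≤ n·log₂ 13 + O(log n), and in particular is at most 3.701n + O(log n). -/
open Real

lemma key_nat (n k : ℕ) (hk : k ≤ n) : 12 ^ (n - k) * Nat.choose n k ≤ 13 ^ n := by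
  have h : (13:ℕ)^n = ∑ i ∈ Finset.range (n+1), 1^i * 12^(n-i) * Nat.choose n i := by
    rw [show (13:ℕ) = 1 + 12 from rfl, add_pow]; simp
  rw [h]
  calc 12^(n-k) * Nat.choose n k = 1^k * 12^(n-k) * Nat.choose n k := by ring
    _ ≤ _ := Finset.single_le_sum
        (f := fun i => 1^i * 12^(n-i) * Nat.choose n i)
        (fun i _ => Nat.zero_le _)
        (Finset.mem_range.mpr (Nat.lt_succ_of_le hk))

set_option exponentiation.threshold 5000 in
set_option maxRecDepth 100000 in
lemma logb_13_le : Real.logb 2 13 ≤ 3.701 := by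
  rw [Real.logb_le_iff_le_rpow (by norm_num) (by norm_num)]
  have h : ((13:ℝ))^(1000:ℕ) ≤ ((2:ℝ) ^ (3.701:ℝ))^(1000:ℕ) := by
    rw [← Real.rpow_natCast ((2:ℝ) ^ (3.701:ℝ)) 1000, ← Real.rpow_mul (by norm_num),
      show (3.701:ℝ) * (1000:ℕ) = ((3701:ℕ):ℝ) by norm_num, Real.rpow_natCast]
    have h13 : (13:ℝ)^(1000:ℕ) = ((13^1000 : ℕ) : ℝ) := by push_cast; ring
    rw [h13, show (2:ℝ)^(3701:ℕ) = ((2^3701 : ℕ) : ℝ) by push_cast; ring]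
    have hnat : (13:ℕ)^1000 ≤ 2^3701 := by norm_num
    exact_mod_cast hnat
  exact le_of_pow_le_pow_left₀ (by norm_num) (Real.rpow_nonneg (by norm_num) _) h

theorem stmt11 :
    ∃ c > (0 : ℝ), ∀ n k : ℕ, 1 ≤ n → k ≤ n →
      (2 + Real.logb 2 3) * ((n : ℝ) - (k : ℝ)) + Real.logb 2 (Nat.choose n k) ≤
          (n : ℝ) * Real.logb 2 13 + c * Real.log n ∧
      (n : ℝ) * Real.logb 2 13 + c * Real.log n ≤ 3.701 * (n : ℝ) + c * Real.log n := by
  refine ⟨1, one_pos, fun n k hn hk => ⟨?_, ?_⟩⟩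
  · have hc : 0 < Nat.choose n k := Nat.choose_pos hk
    have h12 : (2 : ℝ) + Real.logb 2 3 = Real.logb 2 12 := by
      rw [show (12:ℝ) = 4 * 3 by norm_num, Real.logb_mul (by norm_num) (by norm_num),
        show (4:ℝ) = 2^(2:ℕ) by norm_num, Real.logb_pow, Real.logb_self_eq_one] <;> norm_num
    have hcast : (n : ℝ) - (k : ℝ) = ((n - k : ℕ) : ℝ) := by
      rw [Nat.cast_sub hk]
    have hkey : ((12 ^ (n - k) * Nat.choose n k : ℕ) : ℝ) ≤ ((13 ^ n : ℕ) : ℝ) :=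
      Nat.cast_le.mpr (key_nat n k hk)
    have hlog : Real.logb 2 ((12 ^ (n - k) * Nat.choose n k : ℕ) : ℝ) ≤
        Real.logb 2 (((13:ℕ) ^ n : ℕ) : ℝ) := by
      exact Real.logb_le_logb_of_le (by norm_num) (by positivity) hkey
    have hl : Real.logb 2 ((12 ^ (n - k) * Nat.choose n k : ℕ) : ℝ)
        = Real.logb 2 12 * ((n - k : ℕ) : ℝ) + Real.logb 2 (Nat.choose n k) := by
      push_cast
      rw [Real.logb_mul (by positivity) (by exact_mod_cast hc.ne'),
        Real.logb_pow]
      ring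
    have hr : Real.logb 2 (((13:ℕ) ^ n : ℕ) : ℝ) = (n : ℝ) * Real.logb 2 13 := by
      push_cast
      rw [Real.logb_pow]
    have hlogn : (0:ℝ) ≤ Real.log n := by
      apply Real.log_nonneg
      exact_mod_cast hn
    calc (2 + Real.logb 2 3) * ((n : ℝ) - (k : ℝ)) + Real.logb 2 (Nat.choose n k)
        = Real.logb 2 12 * ((n - k : ℕ) : ℝ) + Real.logb 2 (Nat.choose n k) := by
          rw [h12, hcast]
      _ ≤ (n : ℝ) * Real.logb 2 13 := by rw [← hl, ← hr]; exact hlog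
      _ ≤ (n : ℝ) * Real.logb 2 13 + 1 * Real.log n := by linarith
  · have := logb_13_le
    have hn0 : (0:ℝ) ≤ (n:ℝ) := Nat.cast_nonneg n
    nlinarith
end

section
/- For an array A[1..n] with no two consecutive equal elements, the total number of nodes across cMin(A) and cMax(A) that are leftmost children or immediate right siblings of leaves (i.e., invalid nodes) is at least n−1; consequently the total number of valid nodes in cMin(A) and cMax(A) combined is at most n+1. -/
lemma psv_le' (A : ℕ → ℤ) (i : ℕ) : psv A i ≤ i - 1 := Nat.findGreatest_le _

lemma plv_le' (A : ℕ → ℤ) (i : ℕ) : plv A i ≤ i - 1 := Nat.findGreatest_le _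

lemma key_lemma (A : ℕ → ℤ) (n i : ℕ) (h1 : 1 ≤ i) (h2 : i < n) (hne : A i ≠ A (i+1)) :
    isLeftmostChildMin A n (i+1) ∨ isLeftmostChildMax A n (i+1) := by
  rcases lt_or_gt_of_ne hne with hlt | hgt
  · left
    have hpsv : psv A (i+1) = i := by
      apply le_antisymm
      · exact Nat.findGreatest_le _
      · exact Nat.le_findGreatest (le_refl i) hlt
    refine ⟨by omega, by omega, fun j hj1 hjn hp => ?_⟩
    have := psv_le' A j
    omega
  · right
    have hplv : plv A (i+1) = i := by
      apply le_antisymm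
      · exact Nat.findGreatest_le _
      · exact Nat.le_findGreatest (le_refl i) hgt
    refine ⟨by omega, by omega, fun j hj1 hjn hp => ?_⟩
    have := plv_le' A j
    omega

theorem stmt19 (A : ℕ → ℤ) (n : ℕ) (h : NoConsecEq A n) (hn : 1 ≤ n) :
    n - 1 ≤
      Nat.card {i : ℕ // 1 ≤ i ∧ i ≤ n ∧
        (isLeftmostChildMin A n i ∨ ∃ j, immLeftSibMin A n j i ∧ leafMin A n j)} +
      Nat.card {i : ℕ // 1 ≤ i ∧ i ≤ n ∧
        (isLeftmostChildMax A n i ∨ ∃ j, immLeftSibMax A n j i ∧ leafMax A n j)} ∧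
    Nat.card {i : ℕ // validMin A n i} + Nat.card {i : ℕ // validMax A n i} ≤ n + 1 := by
  classical
  set T1 : Finset ℕ := (Finset.Icc 1 n).filter
    (fun i => isLeftmostChildMin A n i ∨ ∃ j, immLeftSibMin A n j i ∧ leafMin A n j) with hT1
  set T2 : Finset ℕ := (Finset.Icc 1 n).filter
    (fun i => isLeftmostChildMax A n i ∨ ∃ j, immLeftSibMax A n j i ∧ leafMax A n j) with hT2
  set V1 : Finset ℕ := (Finset.Icc 1 n).filter (validMin A n) with hV1
  set V2 : Finset ℕ := (Finset.Icc 1 n).filter (validMax A n) with hV2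
  have e1 : Nat.card {i : ℕ // 1 ≤ i ∧ i ≤ n ∧
      (isLeftmostChildMin A n i ∨ ∃ j, immLeftSibMin A n j i ∧ leafMin A n j)} = T1.card := by
    rw [← Nat.card_eq_finsetCard T1]
    apply Nat.card_congr
    apply Equiv.subtypeEquivRight
    intro i
    simp [hT1, Finset.mem_filter, Finset.mem_Icc]
    tauto
  have e2 : Nat.card {i : ℕ // 1 ≤ i ∧ i ≤ n ∧
      (isLeftmostChildMax A n i ∨ ∃ j, immLeftSibMax A n j i ∧ leafMax A n j)} = T2.card := by
    rw [← Nat.card_eq_finsetCard T2]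
    apply Nat.card_congr
    apply Equiv.subtypeEquivRight
    intro i
    simp [hT2, Finset.mem_filter, Finset.mem_Icc]
    tauto
  have e3 : Nat.card {i : ℕ // validMin A n i} = V1.card := by
    rw [← Nat.card_eq_finsetCard V1]
    apply Nat.card_congr
    apply Equiv.subtypeEquivRight
    intro i
    simp only [hV1, Finset.mem_filter, Finset.mem_Icc]
    constructor
    · intro hv; exact ⟨⟨hv.1, hv.2.1⟩, hv⟩
    · intro hv; exact hv.2
  have e4 : Nat.card {i : ℕ // validMax A n i} = V2.card := by
    rw [← Nat.card_eq_finsetCard V2]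
    apply Nat.card_congr
    apply Equiv.subtypeEquivRight
    intro i
    simp only [hV2, Finset.mem_filter, Finset.mem_Icc]
    constructor
    · intro hv; exact ⟨⟨hv.1, hv.2.1⟩, hv⟩
    · intro hv; exact hv.2
  have hsub : Finset.Icc 2 n ⊆ T1 ∪ T2 := by
    intro i hi
    rw [Finset.mem_Icc] at hi
    have hi1 : i - 1 + 1 = i := by omega
    have hne := h (i - 1) (by omega) (by omega)
    have hk := key_lemma A n (i - 1) (by omega) (by omega) hne
    rw [hi1] at hk
    rcases hk with hk | hk
    · apply Finset.mem_union_left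
      rw [hT1, Finset.mem_filter, Finset.mem_Icc]
      exact ⟨⟨by omega, by omega⟩, Or.inl hk⟩
    · apply Finset.mem_union_right
      rw [hT2, Finset.mem_filter, Finset.mem_Icc]
      exact ⟨⟨by omega, by omega⟩, Or.inl hk⟩
  have hcard2 : (Finset.Icc 2 n).card = n - 1 := by
    rw [Nat.card_Icc]; omega
  have hc1 : n - 1 ≤ T1.card + T2.card := by
    calc n - 1 = (Finset.Icc 2 n).card := hcard2.symm
    _ ≤ (T1 ∪ T2).card := Finset.card_le_card hsub
    _ ≤ T1.card + T2.card := Finset.card_union_le _ _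
  have hT1sub : T1 ⊆ Finset.Icc 1 n := Finset.filter_subset _ _
  have hT2sub : T2 ⊆ Finset.Icc 1 n := Finset.filter_subset _ _
  have hIcc : (Finset.Icc 1 n).card = n := by rw [Nat.card_Icc]; omega
  have hT1le : T1.card ≤ n := hIcc ▸ Finset.card_le_card hT1sub
  have hT2le : T2.card ≤ n := hIcc ▸ Finset.card_le_card hT2sub
  have hV1eq : V1 = Finset.Icc 1 n \ T1 := by
    ext i
    simp only [hV1, hT1, Finset.mem_filter, Finset.mem_sdiff, Finset.mem_Icc, validMin]
    constructor
    · rintro ⟨⟨ha, hb⟩, _, _, hc, hd⟩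
      exact ⟨⟨ha, hb⟩, fun hm => hm.2.elim hc hd⟩
    · rintro ⟨⟨ha, hb⟩, hnm⟩
      exact ⟨⟨ha, hb⟩, ha, hb, fun hL => hnm ⟨⟨ha, hb⟩, Or.inl hL⟩,
        fun hS => hnm ⟨⟨ha, hb⟩, Or.inr hS⟩⟩
  have hV2eq : V2 = Finset.Icc 1 n \ T2 := by
    ext i
    simp only [hV2, hT2, Finset.mem_filter, Finset.mem_sdiff, Finset.mem_Icc, validMax]
    constructor
    · rintro ⟨⟨ha, hb⟩, _, _, hc, hd⟩
      exact ⟨⟨ha, hb⟩, fun hm => hm.2.elim hc hd⟩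
    · rintro ⟨⟨ha, hb⟩, hnm⟩
      exact ⟨⟨ha, hb⟩, ha, hb, fun hL => hnm ⟨⟨ha, hb⟩, Or.inl hL⟩,
        fun hS => hnm ⟨⟨ha, hb⟩, Or.inr hS⟩⟩
  have hV1card : V1.card = n - T1.card := by
    rw [hV1eq, Finset.card_sdiff_of_subset hT1sub, hIcc]
  have hV2card : V2.card = n - T2.card := by
    rw [hV2eq, Finset.card_sdiff_of_subset hT2sub, hIcc]
  rw [e1, e2, e3, e4, hV1card, hV2card]
  omega
end
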